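/- arXiv:2605.01473 — 3 statements merged into one kernel-verified Lean document; each statement's English description precedes it below -/
import Mathlib

section
/- Let f : 2^V → ℝ be a submodular set function on a finite set V of cardinality n ≥ 2, and let (v_1, …, v_n) be an MC-ordering of V with respect to f. Then for every subset X ⊊ V with |X ∩ {v_{n−1}, v_n}| = 1, we have f(X) + f(V \ X) ≥ min_{x ∈ X} f({x}) + f(V_{n−1}). -/
open Finset

/-- A set function `f` on a finite ground set `V` is submodular if
`f X + f Y ≥ f (X ∪ Y) + f (X ∩ Y)` for all `X, Y ⊆ V`. -/
def Submodular {V : Type*} [DecidableEq V] [Fintype V] (f : Finset V → ℝ) : Prop :=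
  ∀ X Y : Finset V, f X + f Y ≥ f (X ∪ Y) + f (X ∩ Y)

/-- Given an ordering `v : Fin n → V`, `prefSet v i` is the set `V_{i-1}` of
elements strictly preceding `v i` in the ordering. -/
def prefSet {V : Type*} [DecidableEq V] {n : ℕ} (v : Fin n → V) (i : Fin n) : Finset V :=
  (Finset.univ.filter (fun k : Fin n => k < i)).image v

/-- An ordering `(v 0, …, v (n-1))` of `V` is a minimum capacity ordering (MC-ordering)
with respect to `f` if `f (V_{i-1} ∪ {v_i}) ≤ f (V_{i-1} ∪ {v_j})` for all `i ≤ j`. -/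
def IsMCOrdering {V : Type*} [DecidableEq V] {n : ℕ} (f : Finset V → ℝ) (v : Fin n → V) : Prop :=
  ∀ i j : Fin n, i ≤ j →
    f (insert (v i) (prefSet v i)) ≤ f (insert (v j) (prefSet v i))

namespace MCAux

variable {V : Type*} [DecidableEq V] [Fintype V]

/-- Prefix sets for a sequence `w : ℕ → V`. -/
def PP (w : ℕ → V) (m : ℕ) : Finset V := (Finset.range m).image w

lemma PP_succ (w : ℕ → V) (m : ℕ) : PP w (m + 1) = insert (w m) (PP w m) := by
  simp [PP, Finset.range_add_one]

lemma PP_mono (w : ℕ → V) {b a : ℕ} (h : b ≤ a) : PP w b ⊆ PP w a :=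
  Finset.image_subset_image (Finset.range_subset_range.mpr h)

lemma mem_PP (w : ℕ → V) {m a : ℕ} (h : m < a) : w m ∈ PP w a :=
  Finset.mem_image_of_mem w (Finset.mem_range.mpr h)

lemma PP_rep (w : ℕ → V) {a : ℕ} {x : V} (h : x ∈ PP w a) : ∃ m, m < a ∧ w m = x := by
  simpa [PP, Finset.mem_image, Finset.mem_range] using h

/-- If no index strictly between `b` and `a` is active, then the side is constant
on `[b, a)`. -/
lemma const_side (w : ℕ → V) (X : Finset V) {n b a : ℕ} (han : a ≤ n)
    (h : ∀ k, b < k → k < a → ¬(0 < k ∧ k < n ∧ ((w k ∈ X) ↔ ¬(w (k - 1) ∈ X)))) :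
    ∀ m, b ≤ m → m < a → ((w m ∈ X) ↔ (w b ∈ X)) := by
  intro m hbm
  induction m, hbm using Nat.le_induction with
  | base => intro _; exact Iff.rfl
  | succ m hbm ih =>
    intro hma
    have hma' : m < a := by omega
    have h1 := h (m + 1) (by omega) hma
    have hk : ¬((w (m + 1) ∈ X) ↔ ¬(w m ∈ X)) := by
      intro hiff
      exact h1 ⟨by omega, by omega, by simpa using hiff⟩
    have h2 := ih hma'
    tauto

/-- Key inductive claim: for every active index `a`, writing `a1` for the first
active index, `f(P_a) + f({w a1}) ≤ f(X ∩ P_{a+1}) + f(P_{a+1} \ X)`. -/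
lemma key (f : Finset V → ℝ) (hf : Submodular f) (n : ℕ) (w : ℕ → V)
    (hinj : ∀ m k, m < n → k < n → w m = w k → m = k)
    (hMC : ∀ b a : ℕ, b ≤ a → a < n → f (PP w (b + 1)) ≤ f (insert (w a) (PP w b)))
    (X : Finset V) (a1 : ℕ)
    (ha1 : 0 < a1 ∧ a1 < n ∧ ((w a1 ∈ X) ↔ ¬(w (a1 - 1) ∈ X)))
    (hmin : ∀ m, (0 < m ∧ m < n ∧ ((w m ∈ X) ↔ ¬(w (m - 1) ∈ X))) → a1 ≤ m) :
    ∀ a, (0 < a ∧ a < n ∧ ((w a ∈ X) ↔ ¬(w (a - 1) ∈ X))) →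
      f (PP w a) + f {w a1} ≤ f (X ∩ PP w (a + 1)) + f (PP w (a + 1) \ X) := by
  intro a
  induction a using Nat.strong_induction_on with
  | _ a IH =>
  rintro ⟨ha0, han, haside⟩
  have hwaPa : w a ∉ PP w a := by
    intro hmem
    obtain ⟨m, hm, he⟩ := PP_rep w hmem
    have := hinj m a (by omega) han he
    omega
  by_cases hex : ∃ b, b < a ∧ (0 < b ∧ b < n ∧ ((w b ∈ X) ↔ ¬(w (b - 1) ∈ X)))
  · -- step case: there is a previous active index
    classical
    obtain ⟨b0, hb0a, hb0act⟩ := hex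
    set b := Nat.findGreatest
      (fun m => 0 < m ∧ m < n ∧ ((w m ∈ X) ↔ ¬(w (m - 1) ∈ X))) (a - 1) with hbdef
    have hb0le : b0 ≤ a - 1 := by omega
    have hbact : 0 < b ∧ b < n ∧ ((w b ∈ X) ↔ ¬(w (b - 1) ∈ X)) := by
      have := Nat.findGreatest_spec (P := fun m =>
        0 < m ∧ m < n ∧ ((w m ∈ X) ↔ ¬(w (m - 1) ∈ X))) hb0le hb0act
      exact this
    have hble : b ≤ a - 1 := Nat.findGreatest_le _
    have hba : b < a := by omega
    obtain ⟨hb0, hbn, hbside⟩ := hbact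
    have hnoact : ∀ k, b < k → k < a →
        ¬(0 < k ∧ k < n ∧ ((w k ∈ X) ↔ ¬(w (k - 1) ∈ X))) := by
      intro k h1 h2
      exact Nat.findGreatest_is_greatest h1 (by omega)
    have hconst : ∀ m, b ≤ m → m < a → ((w m ∈ X) ↔ (w b ∈ X)) :=
      const_side w X (by omega) hnoact
    have hside_ab : (w a ∈ X) ↔ ¬(w b ∈ X) := by
      have h1 := hconst (a - 1) (by omega) (by omega)
      tauto
    have hIH := IH b hba ⟨hb0, hbn, hbside⟩
    have hmc := hMC b a (le_of_lt hba) han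
    have hwaPb : w a ∉ PP w b := fun h => hwaPa (PP_mono w hba.le h)
    by_cases hwa : w a ∈ X
    · -- side of v_a is X
      have hwb : w b ∉ X := by tauto
      have hmemT : ∀ m, b ≤ m → m < a → w m ∉ X := by
        intro m h1 h2
        have := hconst m h1 h2
        tauto
      have I1 : X ∩ PP w a = X ∩ PP w b := by
        ext x
        simp only [mem_inter]
        constructor
        · rintro ⟨hx, hp⟩
          obtain ⟨m, hm, rfl⟩ := PP_rep w hp
          rcases lt_or_ge m b with h | h
          · exact ⟨hx, mem_PP w h⟩
          · exact absurd hx (hmemT m h hm)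
        · rintro ⟨hx, hp⟩
          exact ⟨hx, PP_mono w hba.le hp⟩
      have I2 : X ∩ PP w (a + 1) = insert (w a) (X ∩ PP w b) := by
        rw [PP_succ]
        ext x
        simp only [mem_inter, mem_insert]
        constructor
        · rintro ⟨hx, (rfl | hp)⟩
          · exact Or.inl rfl
          · have : x ∈ X ∩ PP w b := by rw [← I1]; exact mem_inter.mpr ⟨hx, hp⟩
            exact Or.inr (mem_inter.mp this)
        · rintro (rfl | ⟨hx, hp⟩)
          · exact ⟨hwa, Or.inl rfl⟩
          · exact ⟨hx, Or.inr (PP_mono w hba.le hp)⟩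
      have I3 : PP w (a + 1) \ X = PP w a \ X := by
        rw [PP_succ]
        ext x
        simp only [mem_sdiff, mem_insert]
        constructor
        · rintro ⟨rfl | hp, hnx⟩
          · exact absurd hwa hnx
          · exact ⟨hp, hnx⟩
        · rintro ⟨hp, hnx⟩
          exact ⟨Or.inr hp, hnx⟩
      have I4 : X ∩ PP w (b + 1) = X ∩ PP w b := by
        rw [PP_succ]
        ext x
        simp only [mem_inter, mem_insert]
        constructor
        · rintro ⟨hx, (rfl | hp)⟩
          · exact absurd hx hwb
          · exact ⟨hx, hp⟩
        · rintro ⟨hx, hp⟩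
          exact ⟨hx, Or.inr hp⟩
      have I5 : PP w (b + 1) \ X = insert (w b) (PP w b \ X) := by
        rw [PP_succ]
        ext x
        simp only [mem_sdiff, mem_insert]
        constructor
        · rintro ⟨rfl | hp, hnx⟩
          · exact Or.inl rfl
          · exact Or.inr ⟨hp, hnx⟩
        · rintro (rfl | ⟨hp, hnx⟩)
          · exact ⟨Or.inl rfl, hwb⟩
          · exact ⟨Or.inr hp, hnx⟩
      have I6 : (PP w a \ X) ∩ PP w (b + 1) = insert (w b) (PP w b \ X) := by
        rw [PP_succ]
        ext x
        simp only [mem_inter, mem_sdiff, mem_insert]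
        constructor
        · rintro ⟨⟨hpa, hnx⟩, (rfl | hpb)⟩
          · exact Or.inl rfl
          · exact Or.inr ⟨hpb, hnx⟩
        · rintro (rfl | ⟨hpb, hnx⟩)
          · exact ⟨⟨mem_PP w hba, hwb⟩, Or.inl rfl⟩
          · exact ⟨⟨PP_mono w hba.le hpb, hnx⟩, Or.inr hpb⟩
      have I7 : (PP w a \ X) ∪ PP w (b + 1) = PP w a := by
        rw [PP_succ]
        ext x
        simp only [mem_union, mem_sdiff, mem_insert]
        constructor
        · rintro (⟨hp, _⟩ | (rfl | hp))
          · exact hp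
          · exact mem_PP w hba
          · exact PP_mono w hba.le hp
        · intro hx
          by_cases hxX : x ∈ X
          · obtain ⟨m, hm, rfl⟩ := PP_rep w hx
            rcases lt_or_ge m b with h | h
            · exact Or.inr (Or.inr (mem_PP w h))
            · exact absurd hxX (hmemT m h hm)
          · exact Or.inl ⟨hx, hxX⟩
      have h3 := hf (insert (w a) (X ∩ PP w b)) (PP w b)
      have e3u : insert (w a) (X ∩ PP w b) ∪ PP w b = insert (w a) (PP w b) := by
        rw [insert_union, union_eq_right.mpr inter_subset_right]
      have e3i : insert (w a) (X ∩ PP w b) ∩ PP w b = X ∩ PP w b := by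
        ext x
        simp only [mem_inter, mem_insert]
        constructor
        · rintro ⟨(rfl | hx), hp⟩
          · exact absurd hp hwaPb
          · exact hx
        · rintro ⟨hx, hp⟩
          exact ⟨Or.inr ⟨hx, hp⟩, hp⟩
      rw [e3u, e3i] at h3
      have h4 := hf (PP w a \ X) (PP w (b + 1))
      rw [I6, I7] at h4
      rw [I4, I5] at hIH
      rw [I2, I3]
      linarith
    · -- side of v_a is the complement of X
      have hwb : w b ∈ X := by tauto
      have hmemS : ∀ m, b ≤ m → m < a → w m ∈ X := by
        intro m h1 h2
        have := hconst m h1 h2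
        tauto
      have I1 : PP w a \ X = PP w b \ X := by
        ext x
        simp only [mem_sdiff]
        constructor
        · rintro ⟨hp, hnx⟩
          obtain ⟨m, hm, rfl⟩ := PP_rep w hp
          rcases lt_or_ge m b with h | h
          · exact ⟨mem_PP w h, hnx⟩
          · exact absurd (hmemS m h hm) hnx
        · rintro ⟨hp, hnx⟩
          exact ⟨PP_mono w hba.le hp, hnx⟩
      have I2 : PP w (a + 1) \ X = insert (w a) (PP w b \ X) := by
        rw [PP_succ]
        ext x
        simp only [mem_sdiff, mem_insert]
        constructor
        · rintro ⟨rfl | hp, hnx⟩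
          · exact Or.inl rfl
          · have : x ∈ PP w b \ X := by rw [← I1]; exact mem_sdiff.mpr ⟨hp, hnx⟩
            exact Or.inr (mem_sdiff.mp this)
        · rintro (rfl | ⟨hp, hnx⟩)
          · exact ⟨Or.inl rfl, hwa⟩
          · exact ⟨Or.inr (PP_mono w hba.le hp), hnx⟩
      have I3 : X ∩ PP w (a + 1) = X ∩ PP w a := by
        rw [PP_succ]
        ext x
        simp only [mem_inter, mem_insert]
        constructor
        · rintro ⟨hx, (rfl | hp)⟩
          · exact absurd hx hwa
          · exact ⟨hx, hp⟩
        · rintro ⟨hx, hp⟩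
          exact ⟨hx, Or.inr hp⟩
      have I4 : PP w (b + 1) \ X = PP w b \ X := by
        rw [PP_succ]
        ext x
        simp only [mem_sdiff, mem_insert]
        constructor
        · rintro ⟨rfl | hp, hnx⟩
          · exact absurd hwb hnx
          · exact ⟨hp, hnx⟩
        · rintro ⟨hp, hnx⟩
          exact ⟨Or.inr hp, hnx⟩
      have I5 : X ∩ PP w (b + 1) = insert (w b) (X ∩ PP w b) := by
        rw [PP_succ]
        ext x
        simp only [mem_inter, mem_insert]
        constructor
        · rintro ⟨hx, (rfl | hp)⟩
          · exact Or.inl rfl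
          · exact Or.inr ⟨hx, hp⟩
        · rintro (rfl | ⟨hx, hp⟩)
          · exact ⟨hwb, Or.inl rfl⟩
          · exact ⟨hx, Or.inr hp⟩
      have I6 : (X ∩ PP w a) ∩ PP w (b + 1) = insert (w b) (X ∩ PP w b) := by
        rw [PP_succ]
        ext x
        simp only [mem_inter, mem_insert]
        constructor
        · rintro ⟨⟨hx, hpa⟩, (rfl | hpb)⟩
          · exact Or.inl rfl
          · exact Or.inr ⟨hx, hpb⟩
        · rintro (rfl | ⟨hx, hpb⟩)
          · exact ⟨⟨hwb, mem_PP w hba⟩, Or.inl rfl⟩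
          · exact ⟨⟨hx, PP_mono w hba.le hpb⟩, Or.inr hpb⟩
      have I7 : (X ∩ PP w a) ∪ PP w (b + 1) = PP w a := by
        rw [PP_succ]
        ext x
        simp only [mem_union, mem_inter, mem_insert]
        constructor
        · rintro (⟨_, hp⟩ | (rfl | hp))
          · exact hp
          · exact mem_PP w hba
          · exact PP_mono w hba.le hp
        · intro hx
          by_cases hxX : x ∈ X
          · exact Or.inl ⟨hxX, hx⟩
          · obtain ⟨m, hm, rfl⟩ := PP_rep w hx
            rcases lt_or_ge m b with h | h
            · exact Or.inr (Or.inr (mem_PP w h))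
            · exact absurd (hmemS m h hm) hxX
      have h3 := hf (insert (w a) (PP w b \ X)) (PP w b)
      have e3u : insert (w a) (PP w b \ X) ∪ PP w b = insert (w a) (PP w b) := by
        rw [insert_union, union_eq_right.mpr sdiff_subset]
      have e3i : insert (w a) (PP w b \ X) ∩ PP w b = PP w b \ X := by
        ext x
        simp only [mem_inter, mem_insert, mem_sdiff]
        constructor
        · rintro ⟨(rfl | hx), hp⟩
          · exact absurd hp hwaPb
          · exact hx
        · rintro ⟨hp, hnx⟩
          exact ⟨Or.inr ⟨hp, hnx⟩, hp⟩
      rw [e3u, e3i] at h3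
      have h4 := hf (X ∩ PP w a) (PP w (b + 1))
      rw [I6, I7] at h4
      rw [I4, I5] at hIH
      rw [I2, I3]
      linarith
  · -- base case: `a` is the first active index, so `a = a1`
    have hex' : ∀ k, k < a → ¬(0 < k ∧ k < n ∧ ((w k ∈ X) ↔ ¬(w (k - 1) ∈ X))) :=
      fun k hk hP => hex ⟨k, hk, hP⟩
    have hconst : ∀ m, 0 ≤ m → m < a → ((w m ∈ X) ↔ (w 0 ∈ X)) :=
      const_side w X (by omega) (fun k _ h2 => hex' k h2)
    have ha1a : a1 = a := by
      have h1 : a1 ≤ a := hmin a ⟨ha0, han, haside⟩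
      have h2 : ¬ a1 < a := fun h => hex' a1 h ha1
      omega
    have hconst' : (w (a - 1) ∈ X) ↔ (w 0 ∈ X) := hconst (a - 1) (by omega) (by omega)
    by_cases h0 : w 0 ∈ X
    · have hwa : w a ∉ X := by tauto
      have e1 : X ∩ PP w (a + 1) = PP w a := by
        rw [PP_succ]
        ext x
        simp only [mem_inter, mem_insert]
        constructor
        · rintro ⟨hx, (rfl | hp)⟩
          · exact absurd hx hwa
          · exact hp
        · intro hp
          obtain ⟨m, hm, rfl⟩ := PP_rep w hp
          exact ⟨(hconst m (by omega) hm).mpr h0, Or.inr hp⟩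
      have e2 : PP w (a + 1) \ X = {w a} := by
        rw [PP_succ]
        ext x
        simp only [mem_sdiff, mem_insert, mem_singleton]
        constructor
        · rintro ⟨rfl | hp, hnx⟩
          · rfl
          · obtain ⟨m, hm, rfl⟩ := PP_rep w hp
            exact absurd ((hconst m (by omega) hm).mpr h0) hnx
        · rintro rfl
          exact ⟨Or.inl rfl, hwa⟩
      rw [e1, e2, ha1a]
    · have hwa : w a ∈ X := by tauto
      have e1 : X ∩ PP w (a + 1) = {w a} := by
        rw [PP_succ]
        ext x
        simp only [mem_inter, mem_insert, mem_singleton]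
        constructor
        · rintro ⟨hx, (rfl | hp)⟩
          · rfl
          · obtain ⟨m, hm, rfl⟩ := PP_rep w hp
            exact absurd hx (fun h => h0 ((hconst m (by omega) hm).mp h))
        · rintro rfl
          exact ⟨hwa, Or.inl rfl⟩
      have e2 : PP w (a + 1) \ X = PP w a := by
        rw [PP_succ]
        ext x
        simp only [mem_sdiff, mem_insert]
        constructor
        · rintro ⟨rfl | hp, hnx⟩
          · exact absurd hwa hnx
          · exact hp
        · intro hp
          obtain ⟨m, hm, rfl⟩ := PP_rep w hp
          exact ⟨Or.inr hp, fun h => h0 ((hconst m (by omega) hm).mp h)⟩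
      rw [e1, e2, ha1a]
      linarith

end MCAux

open MCAux in
/-- Lemma 4.1: for a submodular `f` and an MC-ordering `(v_1, …, v_n)` of `V`,
any `X ⊊ V` with `|X ∩ {v_{n-1}, v_n}| = 1` satisfies
`f(X) + f(V \ X) ≥ min_{x ∈ X} f({x}) + f(V_{n-1})`. -/
theorem stmt_0 {n : ℕ} (hn : 2 ≤ n) {V : Type*} [DecidableEq V] [Fintype V]
    (f : Finset V → ℝ) (hf : Submodular f)
    (v : Fin n → V) (hv : Function.Bijective v)
    (hMC : IsMCOrdering f v)
    (X : Finset V) (hX : X ⊂ Finset.univ)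
    (hcap : (X ∩ ({v ⟨n - 2, by omega⟩, v ⟨n - 1, by omega⟩} : Finset V)).card = 1)
    (hXne : X.Nonempty) :
    f X + f (Finset.univ \ X) ≥
      X.inf' hXne (fun x => f {x}) + f (prefSet v ⟨n - 1, by omega⟩) := by
  classical
  have hn0 : 0 < n := by omega
  set w : ℕ → V := fun m => v ⟨m % n, Nat.mod_lt _ hn0⟩ with hwdef
  have hwlt : ∀ m (hm : m < n), w m = v ⟨m, hm⟩ := by
    intro m hm
    simp only [hwdef]
    congr 1
    exact Fin.ext (Nat.mod_eq_of_lt hm)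
  have hinj : ∀ m k, m < n → k < n → w m = w k → m = k := by
    intro m k hm hk he
    rw [hwlt m hm, hwlt k hk] at he
    have := hv.injective he
    simpa [Fin.ext_iff] using this
  have hpref : ∀ i : Fin n, prefSet v i = PP w i.val := by
    intro i
    ext x
    simp only [prefSet, PP, Finset.mem_image, Finset.mem_filter, Finset.mem_univ,
      true_and, Finset.mem_range]
    constructor
    · rintro ⟨k, hk, rfl⟩
      refine ⟨k.val, hk, ?_⟩
      rw [hwlt k.val k.isLt]
    · rintro ⟨m, hm, rfl⟩
      have hmn : m < n := lt_trans hm i.isLt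
      exact ⟨⟨m, hmn⟩, hm, (hwlt m hmn).symm⟩
  have hMC' : ∀ b a : ℕ, b ≤ a → a < n → f (PP w (b + 1)) ≤ f (insert (w a) (PP w b)) := by
    intro b a hba ha
    have hb : b < n := by omega
    have h := hMC ⟨b, hb⟩ ⟨a, ha⟩ (Fin.mk_le_mk.mpr hba)
    have e1 : prefSet v ⟨b, hb⟩ = PP w b := hpref ⟨b, hb⟩
    rw [e1] at h
    have e2 : insert (v ⟨b, hb⟩) (PP w b) = PP w (b + 1) := by
      rw [PP_succ, hwlt b hb]
    have e3 : v ⟨a, ha⟩ = w a := (hwlt a ha).symm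
    rw [e2, e3] at h
    exact h
  -- the index n-1 is active
  have hp : w (n - 2) = v ⟨n - 2, by omega⟩ := hwlt _ (by omega)
  have hq : w (n - 1) = v ⟨n - 1, by omega⟩ := hwlt _ (by omega)
  have hpq : v (⟨n - 2, by omega⟩ : Fin n) ≠ v ⟨n - 1, by omega⟩ := by
    intro h
    have := hv.injective h
    simp only [Fin.mk.injEq] at this
    omega
  have hside : (v (⟨n - 1, by omega⟩ : Fin n) ∈ X) ↔ ¬(v (⟨n - 2, by omega⟩ : Fin n) ∈ X) := by
    by_cases h1 : v (⟨n - 2, by omega⟩ : Fin n) ∈ X <;>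
      by_cases h2 : v (⟨n - 1, by omega⟩ : Fin n) ∈ X
    · exfalso
      have hsub : ({v ⟨n - 2, by omega⟩, v ⟨n - 1, by omega⟩} : Finset V) ⊆ X := by
        intro x hx
        simp only [Finset.mem_insert, Finset.mem_singleton] at hx
        rcases hx with rfl | rfl
        · exact h1
        · exact h2
      rw [Finset.inter_eq_right.mpr hsub, Finset.card_pair hpq] at hcap
      omega
    · simp [h1, h2]
    · simp [h1, h2]
    · exfalso
      have hempty : X ∩ ({v ⟨n - 2, by omega⟩, v ⟨n - 1, by omega⟩} : Finset V) = ∅ := by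
        ext x
        simp only [Finset.mem_inter, Finset.mem_insert, Finset.mem_singleton,
          Finset.notMem_empty, iff_false, not_and]
        rintro hx (rfl | rfl)
        · exact h1 hx
        · exact h2 hx
      rw [hempty] at hcap
      simp at hcap
  have hactn : 0 < n - 1 ∧ n - 1 < n ∧ ((w (n - 1) ∈ X) ↔ ¬(w ((n - 1) - 1) ∈ X)) := by
    refine ⟨by omega, by omega, ?_⟩
    have e : (n - 1) - 1 = n - 2 := by omega
    rw [e, hq, hp]
    exact hside
  have hexact : ∃ m, 0 < m ∧ m < n ∧ ((w m ∈ X) ↔ ¬(w (m - 1) ∈ X)) := ⟨n - 1, hactn⟩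
  set a1 := Nat.find hexact with ha1def
  have ha1 := Nat.find_spec hexact
  have hmin : ∀ m, (0 < m ∧ m < n ∧ ((w m ∈ X) ↔ ¬(w (m - 1) ∈ X))) → a1 ≤ m :=
    fun m hm => Nat.find_le hm
  have hkey := key f hf n w hinj hMC' X a1 ha1 hmin (n - 1) hactn
  have hPPn : PP w n = univ := by
    apply Finset.eq_univ_of_forall
    intro x
    obtain ⟨i, rfl⟩ := hv.surjective x
    have : w i.val = v i := by rw [hwlt i.val i.isLt]
    rw [← this]
    exact mem_PP w i.isLt
  have hrw : n - 1 + 1 = n := by omega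
  rw [hrw, hPPn, Finset.inter_univ] at hkey
  have hgoalpref : prefSet v ⟨n - 1, by omega⟩ = PP w (n - 1) := hpref _
  rw [hgoalpref]
  have hmu : X.inf' hXne (fun x => f {x}) ≤ f {w a1} := by
    by_cases hx : w a1 ∈ X
    · exact Finset.inf'_le _ hx
    · obtain ⟨h0, hn1, hiff⟩ := ha1
      have hnoact : ∀ k, 0 < k → k < a1 →
          ¬(0 < k ∧ k < n ∧ ((w k ∈ X) ↔ ¬(w (k - 1) ∈ X))) := by
        intro k _ hk
        exact Nat.find_min hexact hk
      have hconst : ∀ m, 0 ≤ m → m < a1 → ((w m ∈ X) ↔ (w 0 ∈ X)) :=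
        const_side w X (by omega) (fun k h1 h2 => hnoact k h1 h2)
      have ha1m : w (a1 - 1) ∈ X := by tauto
      have hw0 : w 0 ∈ X := (hconst (a1 - 1) (by omega) (by omega)).mp ha1m
      have hmc0 := hMC' 0 a1 (by omega) hn1
      have e1 : PP w 1 = {w 0} := by simp [PP]
      have e0 : PP w 0 = ∅ := by simp [PP]
      rw [e1] at hmc0
      have e0' : insert (w a1) (PP w 0) = {w a1} := by simp [PP]
      rw [e0'] at hmc0
      calc X.inf' hXne (fun x => f {x}) ≤ f {w 0} := Finset.inf'_le _ hw0
        _ ≤ f {w a1} := hmc0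
  linarith
end

section
/- Let f : 2^V → ℝ be a symmetric submodular function on a finite set V with |V| ≥ 3, let u, v be distinct elements of V, set V′ = (V \ {u, v}) ∪ {w} for a new element w ∉ V, and define f′ : 2^{V′} → ℝ by f′(X) = f(X) if w ∉ X and f′(X) = f(V′ \ X) if w ∈ X. Then f′ is a symmetric submodular function on V′. -/
open Finset

set_option maxHeartbeats 1000000 in
/-- Contracting a pair `u ≠ v` of a symmetric submodular function `f` on `V` (with
`|V| ≥ 3`) into a new element `w` yields a symmetric submodular function `f'` on
`V' = (V \ {u, v}) ∪ {w}`.  Here `V'` is modeled as `Option {x : V // x ≠ u ∧ x ≠ v}`,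
with `none` playing the role of the new element `w`, and subsets of `V'` not
containing `w` are regarded as subsets of `V` via the coercion. -/
theorem stmt_12 {V : Type*} [DecidableEq V] [Fintype V] (hV : 3 ≤ Fintype.card V)
    (f : Finset V → ℝ) (hsym : ∀ X : Finset V, f X = f Xᶜ) (hsub : Submodular f)
    (u v : V) (huv : u ≠ v)
    (f' : Finset (Option {x : V // x ≠ u ∧ x ≠ v}) → ℝ)
    (hf' : ∀ X : Finset (Option {x : V // x ≠ u ∧ x ≠ v}),
      f' X =
        if none ∈ X then
          f (((Finset.univ \ X).eraseNone).map
            ⟨Subtype.val, Subtype.val_injective⟩)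
        else
          f ((X.eraseNone).map ⟨Subtype.val, Subtype.val_injective⟩)) :
    (∀ X : Finset (Option {x : V // x ≠ u ∧ x ≠ v}), f' X = f' Xᶜ) ∧ Submodular f' := by
  set M : Finset (Option {x : V // x ≠ u ∧ x ≠ v}) → Finset V :=
    fun X => (X.eraseNone).map ⟨Subtype.val, Subtype.val_injective⟩ with hMdef
  have hmem : ∀ (X : Finset (Option {x : V // x ≠ u ∧ x ≠ v})) (x : V),
      x ∈ M X ↔ ∃ h : x ≠ u ∧ x ≠ v, some ⟨x, h⟩ ∈ X := by
    intro X x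
    simp only [hMdef, Finset.mem_map, Finset.mem_eraseNone, Function.Embedding.coeFn_mk]
    constructor
    · rintro ⟨⟨a, ha⟩, hX, rfl⟩; exact ⟨ha, hX⟩
    · rintro ⟨h, hX⟩; exact ⟨⟨x, h⟩, hX, rfl⟩
  have hu : ∀ X, u ∉ M X := by
    intro X h; rw [hmem] at h; exact h.choose.1 rfl
  have hv : ∀ X, v ∉ M X := by
    intro X h; rw [hmem] at h; exact h.choose.2 rfl
  have hMu : ∀ X Y, M (X ∪ Y) = M X ∪ M Y := by
    intro X Y; ext x
    simp only [hmem, Finset.mem_union]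
    constructor
    · rintro ⟨h, h1 | h1⟩
      · exact Or.inl ⟨h, h1⟩
      · exact Or.inr ⟨h, h1⟩
    · rintro (⟨h, h1⟩ | ⟨h, h1⟩)
      · exact ⟨h, Or.inl h1⟩
      · exact ⟨h, Or.inr h1⟩
  have hMi : ∀ X Y, M (X ∩ Y) = M X ∩ M Y := by
    intro X Y
    ext x; simp only [hmem, Finset.mem_inter]
    constructor
    · rintro ⟨h, h1, h2⟩; exact ⟨⟨h, h1⟩, ⟨h, h2⟩⟩
    · rintro ⟨⟨h, h1⟩, ⟨_, h2⟩⟩; exact ⟨h, h1, h2⟩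
  have hcompl : ∀ X, M (Finset.univ \ X) = (M X ∪ {u, v})ᶜ := by
    intro X
    ext x
    simp only [Finset.mem_compl, Finset.mem_union, Finset.mem_insert, Finset.mem_singleton,
      hmem, Finset.mem_sdiff, Finset.mem_univ, true_and]
    by_cases hxu : x = u
    · subst hxu; simp
    by_cases hxv : x = v
    · subst hxv; simp
    · constructor
      · rintro ⟨h, hX⟩ (⟨h', hX'⟩ | rfl | rfl)
        · exact hX hX'
        · exact hxu rfl
        · exact hxv rfl
      · intro h
        exact ⟨⟨hxu, hxv⟩, fun hX => h (Or.inl ⟨⟨hxu, hxv⟩, hX⟩)⟩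
  have hF : ∀ X, f' X = if none ∈ X then f (M X ∪ {u, v}) else f (M X) := by
    intro X
    rw [hf' X]
    split
    · rw [show ((Finset.univ \ X).eraseNone).map ⟨Subtype.val, Subtype.val_injective⟩
          = M (Finset.univ \ X) from rfl, hcompl, ← hsym]
    · rfl
  constructor
  · intro X
    rw [hF X, hF Xᶜ]
    have hc : none ∈ Xᶜ ↔ none ∉ X := by simp
    have hMc : M Xᶜ = M (Finset.univ \ X) := by
      congr 1
    by_cases hX : none ∈ X
    · rw [if_pos hX, if_neg (by simp [hX]), hMc, hcompl, ← hsym]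
    · rw [if_neg hX, if_pos (hc.mpr hX), hMc, hcompl, hsym (M X)]
      congr 1
      ext x
      simp only [Finset.mem_union, Finset.mem_compl, Finset.mem_insert, Finset.mem_singleton]
      have h1 : x = u → x ∉ M X := fun e => e ▸ hu X
      have h2 : x = v → x ∉ M X := fun e => e ▸ hv X
      tauto
  · intro X Y
    rw [hF X, hF Y, hF (X ∪ Y), hF (X ∩ Y), hMu, hMi]
    by_cases hX : none ∈ X <;> by_cases hY : none ∈ Y
    · rw [if_pos hX, if_pos hY, if_pos (Finset.mem_union_left _ hX),
        if_pos (Finset.mem_inter.mpr ⟨hX, hY⟩)]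
      have h := hsub (M X ∪ {u, v}) (M Y ∪ {u, v})
      have e1 : (M X ∪ {u, v}) ∪ (M Y ∪ {u, v}) = (M X ∪ M Y) ∪ {u, v} := by
        ext x; simp only [Finset.mem_union, Finset.mem_inter, Finset.mem_insert, Finset.mem_singleton]; tauto
      have e2 : (M X ∪ {u, v}) ∩ (M Y ∪ {u, v}) = (M X ∩ M Y) ∪ {u, v} := by
        ext x; simp only [Finset.mem_union, Finset.mem_inter, Finset.mem_insert, Finset.mem_singleton]; tauto
      rw [e1, e2] at h; linarith
    · rw [if_pos hX, if_neg hY, if_pos (Finset.mem_union_left _ hX),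
        if_neg (fun h => hY (Finset.mem_inter.mp h).2)]
      have h := hsub (M X ∪ {u, v}) (M Y)
      have e1 : (M X ∪ {u, v}) ∪ M Y = (M X ∪ M Y) ∪ {u, v} := by
        ext x; simp only [Finset.mem_union, Finset.mem_inter, Finset.mem_insert, Finset.mem_singleton]; tauto
      have e2 : (M X ∪ {u, v}) ∩ M Y = M X ∩ M Y := by
        ext x
        simp only [Finset.mem_inter, Finset.mem_union, Finset.mem_insert, Finset.mem_singleton]
        constructor
        · rintro ⟨h1 | h1, h2⟩
          · exact ⟨h1, h2⟩
          · rcases h1 with rfl | rfl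
            · exact absurd h2 (hu Y)
            · exact absurd h2 (hv Y)
        · rintro ⟨h1, h2⟩; exact ⟨Or.inl h1, h2⟩
      rw [e1, e2] at h; linarith
    · rw [if_neg hX, if_pos hY, if_pos (Finset.mem_union_right _ hY),
        if_neg (fun h => hX (Finset.mem_inter.mp h).1)]
      have h := hsub (M X) (M Y ∪ {u, v})
      have e1 : M X ∪ (M Y ∪ {u, v}) = (M X ∪ M Y) ∪ {u, v} := by
        ext x; simp only [Finset.mem_union, Finset.mem_inter, Finset.mem_insert, Finset.mem_singleton]; tauto
      have e2 : M X ∩ (M Y ∪ {u, v}) = M X ∩ M Y := by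
        ext x
        simp only [Finset.mem_inter, Finset.mem_union, Finset.mem_insert, Finset.mem_singleton]
        constructor
        · rintro ⟨h1, h2 | h2⟩
          · exact ⟨h1, h2⟩
          · rcases h2 with rfl | rfl
            · exact absurd h1 (hu X)
            · exact absurd h1 (hv X)
        · rintro ⟨h1, h2⟩; exact ⟨h1, Or.inl h2⟩
      rw [e1, e2] at h; linarith
    · rw [if_neg hX, if_neg hY,
        if_neg (fun h => (Finset.mem_union.mp h).elim hX hY),
        if_neg (fun h => hX (Finset.mem_inter.mp h).1)]
      exact hsub (M X) (M Y)
end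

section
/- Let α be a real number with −2 < α < −1 and set κ_α = 1 + 2/(−1 − α). Let V = {p_1, p_2, p_3, p_4, p_5} and let f : 2^V → ℝ be the cut capacity function of the graph on V with edges {p_1, p_2}, {p_1, p_3}, {p_1, p_5}, {p_3, p_4}, {p_3, p_5} and capacities c(p_1, p_3) = c(p_3, p_5) = 1, c(p_1, p_5) = 2, c(p_1, p_2) = c(p_3, p_4) = κ_α. Then (p_1, p_2, p_3, p_4, p_5) is an α-ordering of V with respect to f, and (p_4, p_5) is not a contractible pair with respect to f. -/
open Finset

def IsAlphaOrdering {V : Type*} [DecidableEq V] {n : ℕ} (α : ℝ)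
    (f : Finset V → ℝ) (v : Fin n → V) : Prop :=
  ∀ i j : Fin n, i ≤ j →
    f (insert (v i) (prefSet v i)) + α * f {v i} ≤
      f (insert (v j) (prefSet v i)) + α * f {v j}

def ContractiblePair {V : Type*} [DecidableEq V] [Fintype V]
    (f : Finset V → ℝ) (u w : V) : Prop :=
  ∀ X : Finset V, X ⊂ Finset.univ → (X ∩ ({u, w} : Finset V)).card = 1 →
    Finset.univ.inf' ⟨u, Finset.mem_univ u⟩ (fun x => f {x}) ≤ f X

def cutFun {V : Type*} [DecidableEq V] [Fintype V] (c : V → V → ℝ) (X : Finset V) : ℝ :=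
  ∑ u ∈ X, ∑ w ∈ Xᶜ, c u w

/-- Capacities of the graph on `{p₁, …, p₅}` (here `pᵢ = i - 1 : Fin 5`) with edges
`{p₁, p₃}, {p₃, p₅}` of capacity `1`, `{p₁, p₅}` of capacity `2`, and
`{p₁, p₂}, {p₃, p₄}` of capacity `k`. -/
def cap15 (k : ℝ) : Fin 5 → Fin 5 → ℝ := fun u w =>
  if (u = 0 ∧ w = 2) ∨ (u = 2 ∧ w = 0) then 1
  else if (u = 2 ∧ w = 4) ∨ (u = 4 ∧ w = 2) then 1
  else if (u = 0 ∧ w = 4) ∨ (u = 4 ∧ w = 0) then 2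
  else if (u = 0 ∧ w = 1) ∨ (u = 1 ∧ w = 0) then k
  else if (u = 2 ∧ w = 3) ∨ (u = 3 ∧ w = 2) then k
  else 0

/-! The singleton cuts of `cap15 κ` are `κ + 3, κ, κ + 2, κ, 3`, so their minimum is `3` once
`κ > 3`, while `{p₃, p₄}`, which separates `p₄` from `p₅`, has cut value `1 + 1 = 2`.

For the `α`-ordering, each of the finitely many defining inequalities becomes linear in `α` and
`κ` after eliminating the product `α κ` through `(1 + α) κ_α = α - 1`. The comparison of `p₃`
with `p₅` after `{p₁, p₂}` then holds with equality: `κ_α` is the root of that linear equation. -/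

theorem cutFun_eq_sum_ite {V : Type*} [DecidableEq V] [Fintype V] (c : V → V → ℝ)
    (X : Finset V) : cutFun c X = ∑ u, ∑ w, if u ∈ X ∧ w ∉ X then c u w else 0 := by
  simp [cutFun, ite_and, Finset.sum_ite_mem, ← Finset.mem_compl]

theorem prefSet_id {n : ℕ} (i : Fin n) : prefSet id i = Finset.Iio i := by
  ext
  simp [prefSet]

theorem cutFun_cap15_singleton (k : ℝ) (x : Fin 5) :
    cutFun (cap15 k) {x} = ![k + 3, k, k + 2, k, 3] x := by
  fin_cases x <;> simp +decide [cutFun_eq_sum_ite, Fin.sum_univ_five, cap15] <;> ring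

theorem cutFun_cap15_pair (k : ℝ) : cutFun (cap15 k) {2, 3} = 2 := by
  simp +decide [cutFun_eq_sum_ite, Fin.sum_univ_five, cap15]
  norm_num

theorem isAlphaOrdering_cap15 {α k : ℝ} (hα₁ : -2 ≤ α) (hα₂ : α ≤ -1) (hk : 3 ≤ k)
    (hαk : (1 + α) * k = α - 1) :
    IsAlphaOrdering α (cutFun (cap15 k)) id := by
  intro i j hij
  fin_cases i <;> fin_cases j <;>
    simp +decide [prefSet_id, cutFun_eq_sum_ite, Fin.sum_univ_five, cap15] at hij ⊢ <;>
    linarith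

theorem not_contractiblePair_cap15 {k : ℝ} (hk : 2 < k) :
    ¬ ContractiblePair (cutFun (cap15 k)) 3 4 := by
  intro h
  have hmin : 2 < Finset.univ.inf' ⟨3, Finset.mem_univ 3⟩ (fun x => cutFun (cap15 k) {x}) := by
    refine (Finset.lt_inf'_iff _).2 fun x _ => ?_
    fin_cases x <;> simp [cutFun_cap15_singleton] <;> linarith
  have := h {2, 3} (by decide) (by decide)
  rw [cutFun_cap15_pair] at this
  linarith

theorem three_lt_kappa {α : ℝ} (hα₁ : -2 < α) (hα₂ : α < -1) : 3 < 1 + 2 / (-1 - α) := by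
  have : 2 < 2 / (-1 - α) := by rw [lt_div_iff₀ (by linarith)]; linarith
  linarith

theorem one_add_mul_kappa {α : ℝ} (hα : α ≠ -1) : (1 + α) * (1 + 2 / (-1 - α)) = α - 1 := by
  have : -1 - α ≠ 0 := by contrapose! hα; linarith
  field_simp
  ring

/-- Case 2 of Proposition 6.1 (`-2 < α < -1`, `κ_α = 1 + 2 / (-1 - α)`): the ordering
`(p₁, p₂, p₃, p₄, p₅)` is an `α`-ordering of the cut function, but `(p₄, p₅)` is not
a contractible pair. -/
theorem stmt_15 (α : ℝ) (hα₁ : -2 < α) (hα₂ : α < -1) :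
    IsAlphaOrdering α (cutFun (cap15 (1 + 2 / (-1 - α)))) (id : Fin 5 → Fin 5) ∧
      ¬ ContractiblePair (cutFun (cap15 (1 + 2 / (-1 - α)))) 3 4 := by
  have hκ := three_lt_kappa hα₁ hα₂
  exact ⟨isAlphaOrdering_cap15 hα₁.le hα₂.le hκ.le (one_add_mul_kappa hα₂.ne),
    not_contractiblePair_cap15 (by linarith)⟩
end
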